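/- Let 0 < α < n, Φ a Young function in class 𝒴 with Δ'-condition, β ∈ (0,1), and φ : (0,∞) → (0,∞) almost decreasing with t ↦ φ(t)/Φ^{-1}(t^{-n}) almost increasing (φ ∈ 𝒢_Φ). Set η = φ^β, Ψ(t) = Φ(t^{1/β}). If the fractional maximal operator M_α is bounded from ℳ^{Φ,φ}(ℝⁿ) to the weak space Wℳ^{Ψ,η}(ℝⁿ), then there exists C > 0 with t^α φ(t) ≤ C φ(t)^β for all t > 0. -/

import Mathlib

open scoped ENNReal NNReal
open MeasureTheory Metric Filter Set

noncomputable section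

/-- A Young function: convex, left-continuous, `Φ 0 = 0`, `Φ(0+)=0`, tends to `∞`. -/
def IsYoung (Φ : ℝ≥0 → ℝ≥0∞) : Prop :=
  (∀ a b t : ℝ≥0, t ≤ 1 →
    Φ (t * a + (1 - t) * b) ≤ (t : ℝ≥0∞) * Φ a + ((1 - t : ℝ≥0) : ℝ≥0∞) * Φ b) ∧
  Φ 0 = 0 ∧
  (∀ r : ℝ≥0, Tendsto Φ (nhdsWithin r (Set.Iio r)) (nhds (Φ r))) ∧
  Tendsto Φ (nhdsWithin 0 (Set.Ioi 0)) (nhds 0) ∧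
  Tendsto Φ atTop atTop

/-- The class `𝒴`: `0 < Φ r < ∞` for `0 < r`. -/
def FinPos (Φ : ℝ≥0 → ℝ≥0∞) : Prop := ∀ r : ℝ≥0, 0 < r → 0 < Φ r ∧ Φ r ≠ ∞

/-- Generalized inverse `Φ⁻¹(s) = inf {r ≥ 0 : Φ r > s}`. -/
def yInv (Φ : ℝ≥0 → ℝ≥0∞) (s : ℝ≥0∞) : ℝ≥0∞ :=
  ⨅ (r : ℝ≥0) (_ : s < Φ r), (r : ℝ≥0∞)

/-- Extension of a Young function to `ℝ≥0∞`. -/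
def yExt (Φ : ℝ≥0 → ℝ≥0∞) (s : ℝ≥0∞) : ℝ≥0∞ := if s = ∞ then ∞ else Φ s.toNNReal

/-- Luxemburg (Orlicz) norm. -/
def luxNorm {E : Type*} [MeasurableSpace E] (μ : Measure E) (Φ : ℝ≥0 → ℝ≥0∞)
    (g : E → ℝ≥0∞) : ℝ≥0∞ :=
  ⨅ (lam : ℝ≥0) (_ : 0 < lam) (_ : ∫⁻ x, yExt Φ (g x / lam) ∂μ ≤ 1), (lam : ℝ≥0∞)

/-- Weak Orlicz quasinorm. -/
def wLuxNorm {E : Type*} [MeasurableSpace E] (μ : Measure E) (Φ : ℝ≥0 → ℝ≥0∞)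
    (g : E → ℝ≥0∞) : ℝ≥0∞ :=
  ⨅ (lam : ℝ≥0) (_ : 0 < lam)
    (_ : ∀ t : ℝ≥0, 0 < t → Φ (t / lam) * μ {x | (t : ℝ≥0∞) < g x} ≤ 1), (lam : ℝ≥0∞)

abbrev Rn (n : ℕ) := EuclideanSpace ℝ (Fin n)

/-- `|f|` as an `ℝ≥0∞`-valued function. -/
def eabs {E : Type*} (f : E → ℝ) : E → ℝ≥0∞ := fun x => (‖f x‖₊ : ℝ≥0∞)

/-- Centered fractional maximal operator. -/
def fracMax (n : ℕ) (α : ℝ) (g : Rn n → ℝ≥0∞) (x : Rn n) : ℝ≥0∞ :=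
  ⨆ (t : ℝ) (_ : 0 < t), volume (ball x t) ^ (α / (n : ℝ) - 1) * ∫⁻ y in ball x t, g y

/-- Uncentered fractional maximal operator. -/
def fracMaxUncentered (n : ℕ) (α : ℝ) (g : Rn n → ℝ≥0∞) (x : Rn n) : ℝ≥0∞ :=
  ⨆ (c : Rn n) (t : ℝ) (_ : 0 < t) (_ : x ∈ ball c t),
    volume (ball c t) ^ (α / (n : ℝ) - 1) * ∫⁻ y in ball c t, g y

/-- Riesz potential. -/
def riesz (n : ℕ) (α : ℝ) (g : Rn n → ℝ≥0∞) (x : Rn n) : ℝ≥0∞ :=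
  ∫⁻ y, g y / ENNReal.ofReal (dist x y ^ ((n : ℝ) - α))

end


noncomputable section AuxLemmas

variable {Φ : ℝ≥0 → ℝ≥0∞}

lemma aux_mono (hΦ : IsYoung Φ) : Monotone Φ := by
  intro a b hab
  rcases eq_or_ne b 0 with rfl | hb
  · simp [le_antisymm hab (zero_le : (0:ℝ≥0) ≤ a)]
  · have hb' : 0 < b := pos_iff_ne_zero.mpr hb
    have ht : a / b ≤ 1 := (div_le_one hb').mpr hab
    have h := hΦ.1 b 0 (a / b) ht
    rw [div_mul_cancel₀ a hb, mul_zero, add_zero, hΦ.2.1, mul_zero, add_zero] at h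
    calc Φ a ≤ ((a/b : ℝ≥0) : ℝ≥0∞) * Φ b := h
    _ ≤ 1 * Φ b := by
        exact mul_le_mul_left (by exact_mod_cast ht) _
    _ = Φ b := one_mul _

lemma aux_yInv_le {s : ℝ≥0∞} {w : ℝ≥0} (h : s < Φ w) : yInv Φ s ≤ w :=
  iInf_le_of_le w (iInf_le_of_le h le_rfl)

lemma aux_lt_of_yInv_lt (hm : Monotone Φ) {s : ℝ≥0∞} {w : ℝ≥0} (h : yInv Φ s < w) : s < Φ w := by
  obtain ⟨r, hr, hrw⟩ : ∃ r:ℝ≥0, s < Φ r ∧ (r:ℝ≥0∞) < w := by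
    simpa [yInv, iInf_lt_iff] using h
  exact hr.trans_le (hm (by exact_mod_cast hrw.le))

lemma aux_le_of_lt_yInv {s : ℝ≥0∞} {w : ℝ≥0} (h : (w:ℝ≥0∞) < yInv Φ s) : Φ w ≤ s := by
  by_contra hc
  exact absurd (aux_yInv_le (not_le.1 hc)) (not_le.2 h)

lemma aux_yInv_pos (h0 : Φ 0 = 0) (ht : Tendsto Φ (nhdsWithin 0 (Set.Ioi 0)) (nhds 0))
    {s : ℝ≥0∞} (hs : 0 < s) : 0 < yInv Φ s := by
  have h2 : ∀ᶠ u in nhdsWithin 0 (Set.Ioi 0), Φ u < s := ht.eventually_lt_const hs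
  rw [eventually_nhdsWithin_iff, NNReal.nhds_zero_basis.eventually_iff] at h2
  obtain ⟨δ, hδ, h3⟩ := h2
  have hle : (δ : ℝ≥0∞) ≤ yInv Φ s := by
    refine le_iInf₂ fun r hr => ?_
    rcases eq_or_ne r 0 with rfl | hr0
    · rw [h0] at hr; exact absurd hr (not_lt.mpr hs.le)
    · by_contra hlt
      have hrδ : r < δ := by exact_mod_cast not_le.1 hlt
      exact absurd hr (not_lt.mpr (h3 hrδ (pos_iff_ne_zero.mpr hr0)).le)
  exact lt_of_lt_of_le (by exact_mod_cast hδ) hle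

lemma aux_yInv_lt_top (ht : Tendsto Φ atTop atTop) {s : ℝ≥0∞} (hs : s ≠ ∞) :
    yInv Φ s < ∞ := by
  obtain ⟨r, hr⟩ : ∃ r:ℝ≥0, s + 1 ≤ Φ r := (tendsto_atTop.mp ht (s+1)).exists
  exact lt_of_le_of_lt (aux_yInv_le (lt_of_lt_of_le (ENNReal.lt_add_right hs one_ne_zero) hr))
    ENNReal.coe_lt_top

lemma aux_yInv_mono {s s' : ℝ≥0∞} (h : s ≤ s') : yInv Φ s ≤ yInv Φ s' :=
  le_iInf₂ fun _ hr => aux_yInv_le (h.trans_lt hr)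

/-- scaling lemma from the Δ' condition -/
lemma aux_scale (hΦ : IsYoung Φ) (hY : FinPos Φ) {C : ℝ≥0} (hC1 : 1 < C)
    (hΔ : ∀ t r : ℝ≥0, Φ (t*r) ≤ (C:ℝ≥0∞) * Φ t * Φ r) (K : ℝ≥0∞) (hK : K ≠ ∞) :
    ∃ M : ℝ≥0, 0 < M ∧ ∀ s, yInv Φ (K * s) ≤ M * yInv Φ s := by
  have hC0 : (C:ℝ≥0∞) ≠ 0 := by exact_mod_cast (lt_trans one_pos hC1).ne'
  have hCt : (C:ℝ≥0∞) ≠ ∞ := ENNReal.coe_ne_top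
  have hpos : (0:ℝ≥0∞) < (C:ℝ≥0∞)⁻¹ * K⁻¹ :=
    ENNReal.mul_pos (ENNReal.inv_ne_zero.mpr hCt) (ENNReal.inv_ne_zero.mpr hK)
  have h2 : ∀ᶠ u in nhdsWithin 0 (Set.Ioi 0), Φ u < (C:ℝ≥0∞)⁻¹ * K⁻¹ :=
    hΦ.2.2.2.1.eventually_lt_const hpos
  obtain ⟨u, hu⟩ := (h2.and self_mem_nhdsWithin).exists
  have hu0 : 0 < u := hu.2
  have hΦu : (C:ℝ≥0∞) * Φ u < K⁻¹ := by
    calc (C:ℝ≥0∞) * Φ u < (C:ℝ≥0∞) * ((C:ℝ≥0∞)⁻¹ * K⁻¹) :=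
          (ENNReal.mul_lt_mul_iff_right hC0 hCt).mpr hu.1
    _ = K⁻¹ := by rw [← mul_assoc, ENNReal.mul_inv_cancel hC0 hCt, one_mul]
  refine ⟨u⁻¹, by positivity, fun s => ?_⟩
  rcases eq_or_ne s ∞ with rfl | hstop
  · have h1 : ((u⁻¹:ℝ≥0):ℝ≥0∞) * yInv Φ ∞ = ∞ := by
      rw [show yInv Φ (∞:ℝ≥0∞) = ∞ by simp [yInv]]
      exact ENNReal.mul_top (by exact_mod_cast (show (0:ℝ≥0) < u⁻¹ by positivity).ne')
    rw [h1]; exact le_top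
  · -- s ≠ ∞
    have key : ∀ r : ℝ≥0, s < Φ r → yInv Φ (K * s) ≤ (u⁻¹ * r : ℝ≥0) := by
      intro r hr
      have hr0 : 0 < r := by
        rcases eq_or_ne r 0 with rfl | h
        · rw [hΦ.2.1] at hr; exact absurd hr (by simp)
        · exact pos_iff_ne_zero.mpr h
      refine aux_yInv_le ?_
      by_contra hcon
      push_neg at hcon
      have heq : (u⁻¹ * r) * u = r := by field_simp
      have hchain : Φ r ≤ ((C:ℝ≥0∞) * Φ u) * Φ (u⁻¹ * r) := by
        calc Φ r = Φ ((u⁻¹ * r) * u) := by rw [heq]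
        _ ≤ (C:ℝ≥0∞) * Φ (u⁻¹ * r) * Φ u := hΔ _ _
        _ = ((C:ℝ≥0∞) * Φ u) * Φ (u⁻¹ * r) := by ring
      rcases eq_or_ne (K * s) 0 with hks | hks
      · have : Φ (u⁻¹ * r) = 0 := le_antisymm (hks ▸ hcon) zero_le
        exact absurd this (hY _ (by positivity)).1.ne'
      · have hkst : K * s ≠ ∞ := ENNReal.mul_ne_top hK hstop
        have : Φ r < s := by
          calc Φ r ≤ ((C:ℝ≥0∞) * Φ u) * Φ (u⁻¹ * r) := hchain
          _ ≤ ((C:ℝ≥0∞) * Φ u) * (K * s) := mul_le_mul_right hcon _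
          _ < K⁻¹ * (K * s) := (ENNReal.mul_lt_mul_iff_left hks hkst).mpr hΦu
          _ = s := by
              rw [← mul_assoc, ENNReal.inv_mul_cancel (fun h => hks (by rw [h, zero_mul])) hK,
                one_mul]
        exact absurd hr (not_lt.mpr this.le)
    have hM0 : ((u⁻¹:ℝ≥0) : ℝ≥0∞) ≠ 0 := by exact_mod_cast (by positivity : (0:ℝ≥0) < u⁻¹).ne'
    have hMt : ((u⁻¹:ℝ≥0) : ℝ≥0∞) ≠ ∞ := ENNReal.coe_ne_top
    rw [mul_comm _ (yInv Φ s), ← ENNReal.div_le_iff_le_mul (Or.inl hM0) (Or.inl hMt)]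
    refine le_iInf₂ fun r hr => ?_
    rw [ENNReal.div_le_iff_le_mul (Or.inl hM0) (Or.inl hMt)]
    calc yInv Φ (K * s) ≤ ((u⁻¹ * r : ℝ≥0) : ℝ≥0∞) := key r hr
    _ = (u⁻¹:ℝ≥0) * (r:ℝ≥0∞) := by rw [ENNReal.coe_mul]
    _ = (r:ℝ≥0∞) * (u⁻¹:ℝ≥0) := mul_comm _ _

end AuxLemmas

noncomputable section AuxLemmas2

variable {Φ : ℝ≥0 → ℝ≥0∞}

/-- Luxemburg norm bound for indicator functions. -/
lemma aux_lux_le {E : Type*} [MeasurableSpace E] (μ : Measure E)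
    (h0 : Φ 0 = 0) (htz : Tendsto Φ (nhdsWithin 0 (Set.Ioi 0)) (nhds 0))
    (htt : Tendsto Φ atTop atTop)
    (S : Set E) (hS : MeasurableSet S)
    (V : ℝ≥0∞) (hV0 : V ≠ 0) (hVt : V ≠ ∞) (hSV : μ S ≤ V) :
    yInv Φ V⁻¹ * luxNorm μ Φ (S.indicator fun _ => (1:ℝ≥0∞)) ≤ 2 := by
  set I := yInv Φ V⁻¹ with hIdef
  have hI0 : 0 < I := aux_yInv_pos h0 htz (ENNReal.inv_pos.mpr hVt)
  have hIt : I < ∞ := aux_yInv_lt_top htt (ENNReal.inv_ne_top.mpr hV0)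
  set w : ℝ≥0 := (I/2).toNNReal with hwdef
  have hw : (w:ℝ≥0∞) = I / 2 := ENNReal.coe_toNNReal (by
    exact (ENNReal.div_lt_top hIt.ne (by norm_num)).ne)
  have hwpos : 0 < w := by
    have : (0:ℝ≥0∞) < I / 2 := ENNReal.div_pos hI0.ne' (by norm_num)
    rw [← hw] at this; exact_mod_cast this
  have hwI : (w:ℝ≥0∞) < I := by rw [hw]; exact ENNReal.half_lt_self hI0.ne' hIt.ne
  have hΦw : Φ w ≤ V⁻¹ := aux_le_of_lt_yInv hwI
  have hcond : ∫⁻ x, yExt Φ (S.indicator (fun _ => (1:ℝ≥0∞)) x / (w⁻¹ : ℝ≥0)) ∂μ ≤ 1 := by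
    have hint : ∀ x, yExt Φ (S.indicator (fun _ => (1:ℝ≥0∞)) x / (w⁻¹ : ℝ≥0)) =
        S.indicator (fun _ => Φ w) x := by
      intro x
      by_cases hx : x ∈ S
      · simp only [Set.indicator_of_mem hx]
        rw [ENNReal.coe_inv hwpos.ne', one_div, inv_inv, yExt,
          if_neg ENNReal.coe_ne_top, ENNReal.toNNReal_coe]
      · simp only [Set.indicator_of_notMem hx]
        rw [ENNReal.zero_div, yExt, if_neg (by norm_num), ENNReal.toNNReal_zero, h0]
    rw [lintegral_congr hint, lintegral_indicator_const hS]
    calc Φ w * μ S ≤ V⁻¹ * V := mul_le_mul' hΦw hSV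
    _ = 1 := ENNReal.inv_mul_cancel hV0 hVt
  have hlux : luxNorm μ Φ (S.indicator fun _ => (1:ℝ≥0∞)) ≤ ((w⁻¹ : ℝ≥0) : ℝ≥0∞) :=
    iInf_le_of_le w⁻¹ (iInf_le_of_le (by positivity) (iInf_le_of_le hcond le_rfl))
  calc I * luxNorm μ Φ (S.indicator fun _ => (1:ℝ≥0∞)) ≤ I * (w:ℝ≥0∞)⁻¹ := by
        rw [← ENNReal.coe_inv hwpos.ne']; exact mul_le_mul_right hlux I
  _ ≤ ((w:ℝ≥0∞) * 2) * (w:ℝ≥0∞)⁻¹ := by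
      refine mul_le_mul_left ?_ _
      rw [hw, ENNReal.div_mul_cancel (by norm_num) (by norm_num)]
  _ = 2 * ((w:ℝ≥0∞) * (w:ℝ≥0∞)⁻¹) := by ring
  _ = 2 := by rw [ENNReal.mul_inv_cancel (by exact_mod_cast hwpos.ne') ENNReal.coe_ne_top, mul_one]

/-- Weak Luxemburg norm lower bound. -/
lemma aux_wlux_ge {E : Type*} [MeasurableSpace E] (μ : Measure E) {Ψ : ℝ≥0 → ℝ≥0∞}
    (hm : Monotone Ψ) (B : Set E) (hB0 : μ B ≠ 0) (hBt : μ B ≠ ∞)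
    {I : ℝ≥0∞} (hI : I = yInv Ψ (μ B)⁻¹) (hI0 : 0 < I) (hIt : I ≠ ∞)
    (g : E → ℝ≥0∞) (a : ℝ≥0∞) (hg : ∀ x ∈ B, a ≤ g x) :
    a ≤ I * wLuxNorm μ Ψ g := by
  have key : ∀ lam : ℝ≥0, 0 < lam →
      (∀ t : ℝ≥0, 0 < t → Ψ (t / lam) * μ {x | (t : ℝ≥0∞) < g x} ≤ 1) →
      a ≤ I * lam := by
    intro lam hlam hcond
    by_contra hcon
    push_neg at hcon
    obtain ⟨t, ht1, ht2⟩ := ENNReal.lt_iff_exists_nnreal_btwn.mp hcon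
    have hIlam : (0:ℝ≥0∞) < I * lam := ENNReal.mul_pos hI0.ne' (by exact_mod_cast hlam.ne')
    have ht0 : 0 < t := by exact_mod_cast hIlam.trans ht1
    have hsub : B ⊆ {x | (t : ℝ≥0∞) < g x} := fun x hx => lt_of_lt_of_le ht2 (hg x hx)
    have h1 : Ψ (t / lam) * μ B ≤ 1 :=
      le_trans (mul_le_mul_right (measure_mono hsub) _) (hcond t ht0)
    have h2 : Ψ (t / lam) ≤ (μ B)⁻¹ := ENNReal.le_inv_iff_mul_le.mpr h1
    have h3 : ((t / lam : ℝ≥0) : ℝ≥0∞) ≤ I := by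
      by_contra h4
      push_neg at h4
      rw [hI] at h4
      exact absurd h2 (not_le.mpr (aux_lt_of_yInv_lt hm h4))
    have h5 : (t : ℝ≥0∞) ≤ I * lam := by
      have : ((t / lam : ℝ≥0) : ℝ≥0∞) * lam ≤ I * lam := mul_le_mul_left h3 _
      rwa [← ENNReal.coe_mul, div_mul_cancel₀ t hlam.ne'] at this
    exact absurd ht1 (not_lt.mpr h5)
  have hdiv : a / I ≤ wLuxNorm μ Ψ g := by
    refine le_iInf fun lam => le_iInf fun hlam => le_iInf fun hcond => ?_
    rw [ENNReal.div_le_iff_le_mul (Or.inl hI0.ne') (Or.inl hIt)]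
    exact le_trans (key lam hlam hcond) (by rw [mul_comm])
  calc a = I * (a / I) := (ENNReal.mul_div_cancel hI0.ne' hIt).symm
  _ ≤ I * wLuxNorm μ Ψ g := mul_le_mul_right hdiv I

end AuxLemmas2

noncomputable section AuxLemmas3

variable {Φ : ℝ≥0 → ℝ≥0∞}

lemma aux_psi_mono (hm : Monotone Φ) {β : ℝ} (hβ : 0 < β) :
    Monotone (fun u:ℝ≥0 => Φ (u ^ (1/β))) :=
  fun _ _ h => hm (NNReal.rpow_le_rpow h (by positivity))

lemma aux_psi_zero (h0 : Φ 0 = 0) {β : ℝ} (hβ : 0 < β) :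
    (fun u:ℝ≥0 => Φ (u ^ (1/β))) 0 = 0 := by
  simp only
  rw [NNReal.zero_rpow (by positivity), h0]

lemma aux_psi_tendsto0 (htz : Tendsto Φ (nhdsWithin 0 (Set.Ioi 0)) (nhds 0)) {β : ℝ} (hβ : 0 < β) :
    Tendsto (fun u:ℝ≥0 => Φ (u ^ (1/β))) (nhdsWithin 0 (Set.Ioi 0)) (nhds 0) := by
  have hr : Tendsto (fun u:ℝ≥0 => u ^ (1/β)) (nhdsWithin 0 (Set.Ioi 0))
      (nhdsWithin 0 (Set.Ioi 0)) := by
    rw [tendsto_nhdsWithin_iff]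
    constructor
    · have hco : ContinuousAt (fun u:ℝ≥0 => u ^ (1/β)) 0 :=
        NNReal.continuousAt_rpow_const (Or.inr (by positivity))
      have h2 := hco.tendsto.mono_left (nhdsWithin_le_nhds (s := Set.Ioi 0))
      simpa [one_div, NNReal.zero_rpow (show β⁻¹ ≠ 0 by positivity)] using h2
    · filter_upwards [self_mem_nhdsWithin] with u hu
      exact NNReal.rpow_pos hu
  exact htz.comp hr

lemma aux_psi_tendstoTop (htt : Tendsto Φ atTop atTop) {β : ℝ} (hβ : 0 < β) :
    Tendsto (fun u:ℝ≥0 => Φ (u ^ (1/β))) atTop atTop := by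
  refine htt.comp (Filter.tendsto_atTop_atTop.mpr fun b => ⟨b ^ β, fun a ha => ?_⟩)
  calc b = (b ^ β) ^ (1/β) := by
        rw [← NNReal.rpow_mul, mul_one_div, div_self hβ.ne', NNReal.rpow_one]
  _ ≤ a ^ (1/β) := NNReal.rpow_le_rpow ha (by positivity)

end AuxLemmas3


theorem statement19 (n : ℕ) (hn : 0 < n) (α : ℝ) (hα0 : 0 < α) (hαn : α < n)
    (Φ : ℝ≥0 → ℝ≥0∞) (hΦ : IsYoung Φ) (hY : FinPos Φ)
    (hΔ : ∃ C : ℝ≥0, 1 < C ∧ ∀ t r : ℝ≥0, Φ (t * r) ≤ (C : ℝ≥0∞) * Φ t * Φ r)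
    (β : ℝ) (hβ0 : 0 < β) (hβ1 : β < 1)
    (φ : ℝ → ℝ) (hφpos : ∀ t : ℝ, 0 < t → 0 < φ t)
    -- φ is almost decreasing
    (had : ∃ C : ℝ, 0 < C ∧ ∀ r s : ℝ, 0 < r → r ≤ s → φ s ≤ C * φ r)
    -- t ↦ φ t / Φ⁻¹(t^{-n}) is almost increasing
    (hai : ∃ C : ℝ≥0, 0 < C ∧ ∀ r s : ℝ, 0 < r → r ≤ s →
      ENNReal.ofReal (φ r) / yInv Φ ((ENNReal.ofReal r) ^ (-(n : ℝ))) ≤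
        (C : ℝ≥0∞) * (ENNReal.ofReal (φ s) / yInv Φ ((ENNReal.ofReal s) ^ (-(n : ℝ)))))
    -- M_α is bounded from ℳ^{Φ,φ} to Wℳ^{Ψ,η} with Ψ(t) = Φ(t^{1/β}), η = φ^β
    (hbdd : ∃ C : ℝ≥0, 0 < C ∧ ∀ f : Rn n → ℝ,
      (⨆ (x : Rn n) (r : ℝ) (_ : 0 < r),
        ENNReal.ofReal ((φ r) ^ β)⁻¹ *
          yInv (fun u : ℝ≥0 => Φ (u ^ (1 / β))) (volume (ball x r))⁻¹ *
          wLuxNorm volume (fun u : ℝ≥0 => Φ (u ^ (1 / β)))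
            ((ball x r).indicator (fracMax n α (eabs f)))) ≤
      (C : ℝ≥0∞) * ⨆ (x : Rn n) (r : ℝ) (_ : 0 < r),
        ENNReal.ofReal (φ r)⁻¹ * yInv Φ (volume (ball x r))⁻¹ *
          luxNorm volume Φ ((ball x r).indicator (eabs f))) :
    ∃ C : ℝ, 0 < C ∧ ∀ t : ℝ, 0 < t → t ^ α * φ t ≤ C * φ t ^ β := by
  classical
  obtain ⟨Cd, hCd1, hΔ'⟩ := hΔ
  obtain ⟨Ca, hCa, hAD⟩ := had
  obtain ⟨Ci, hCi, hAI⟩ := hai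
  obtain ⟨Cb, hCb, hB⟩ := hbdd
  have hmono : Monotone Φ := aux_mono hΦ
  have hΦ0 : Φ 0 = 0 := hΦ.2.1
  have hΦtz := hΦ.2.2.2.1
  have hΦtt := hΦ.2.2.2.2
  have hΨmono : Monotone (fun u:ℝ≥0 => Φ (u ^ (1/β))) := aux_psi_mono hmono hβ0
  have hΨ0 : (fun u:ℝ≥0 => Φ (u ^ (1/β))) 0 = 0 := aux_psi_zero hΦ0 hβ0
  have hΨtz := aux_psi_tendsto0 hΦtz hβ0
  have hΨtt := aux_psi_tendstoTop hΦtt hβ0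
  have hnR : (0:ℝ) < n := by exact_mod_cast hn
  haveI : Nontrivial (Rn n) := Module.nontrivial_of_finrank_pos (R := ℝ)
    (by rw [finrank_euclideanSpace_fin]; exact hn)
  set c : ℝ≥0∞ := volume (ball (0 : Rn n) 1) with hcdef
  have hc0 : c ≠ 0 := (measure_ball_pos volume _ one_pos).ne'
  have hct : c ≠ ∞ := measure_ball_lt_top.ne
  have hballvol : ∀ (x : Rn n) (r : ℝ), 0 ≤ r →
      volume (ball x r) = ENNReal.ofReal (r ^ n) * c := by
    intro x r hr
    rw [Measure.addHaar_ball volume x hr, finrank_euclideanSpace_fin]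
  obtain ⟨M1, hM1, hscale1⟩ := aux_scale hΦ hY hCd1 hΔ' c⁻¹ (ENNReal.inv_ne_top.mpr hc0)
  obtain ⟨M2, hM2, hscale2⟩ := aux_scale hΦ hY hCd1 hΔ' c hct
  set A : ℝ := c.toReal with hAdef
  have hA0 : 0 < A := ENNReal.toReal_pos hc0 hct
  set c₀ : ℝ := (2^n * A) ^ (α/(n:ℝ) - 1) * A with hc₀def
  have hc₀ : 0 < c₀ := by positivity
  set K : ℝ≥0∞ := ENNReal.ofReal Ca * 2 + 2 * (M1:ℝ≥0∞) * (Ci:ℝ≥0∞) * (M2:ℝ≥0∞) with hKdef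
  have hKt : K ≠ ∞ := by
    rw [hKdef]
    refine ENNReal.add_ne_top.mpr ⟨ENNReal.mul_ne_top ENNReal.ofReal_ne_top (by norm_num), ?_⟩
    exact ENNReal.mul_ne_top (ENNReal.mul_ne_top
      (ENNReal.mul_ne_top (by norm_num) ENNReal.coe_ne_top) ENNReal.coe_ne_top) ENNReal.coe_ne_top
  set D : ℝ≥0∞ := (Cb:ℝ≥0∞) * K with hDdef
  have hDt : D ≠ ∞ := ENNReal.mul_ne_top ENNReal.coe_ne_top hKt
  refine ⟨D.toReal / c₀ + 1, by positivity, fun t ht => ?_⟩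
  have hφt : 0 < φ t := hφpos t ht
  have hφβ : 0 < φ t ^ β := Real.rpow_pos_of_pos hφt β
  -- basic volume facts for the ball of radius t
  have hV0eq : volume (ball (0:Rn n) t) = ENNReal.ofReal (t ^ n) * c := hballvol _ t ht.le
  have hV00 : volume (ball (0:Rn n) t) ≠ 0 := (measure_ball_pos volume _ ht).ne'
  have hV0t : volume (ball (0:Rn n) t) ≠ ∞ := measure_ball_lt_top.ne
  -- the test function
  set f : Rn n → ℝ := (ball (0:Rn n) t).indicator (fun _ => (1:ℝ)) with hfdef
  have heabs : eabs f = (ball (0:Rn n) t).indicator (fun _ => (1:ℝ≥0∞)) := by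
    funext y
    by_cases hy : y ∈ ball (0:Rn n) t <;> simp [eabs, hfdef, hy]
  -- inverse volume identities
  have hVinv : ∀ (x : Rn n) (s : ℝ), 0 < s →
      (volume (ball x s))⁻¹ = c⁻¹ * (ENNReal.ofReal s) ^ (-(n:ℝ)) := by
    intro x s hs
    have h1 : (ENNReal.ofReal s) ^ (-(n:ℝ)) = (ENNReal.ofReal (s ^ n))⁻¹ := by
      rw [ENNReal.rpow_neg, ENNReal.ofReal_rpow_of_pos hs, Real.rpow_natCast]
    rw [hballvol x s hs.le, h1,
      ENNReal.mul_inv (Or.inl (ENNReal.ofReal_pos.mpr (by positivity)).ne')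
        (Or.inr hc0), mul_comm]
  -- J s facts
  have hJ : ∀ s : ℝ, 0 < s →
      0 < yInv Φ ((ENNReal.ofReal s) ^ (-(n:ℝ))) ∧
      yInv Φ ((ENNReal.ofReal s) ^ (-(n:ℝ))) ≠ ∞ := by
    intro s hs
    have h1 : (ENNReal.ofReal s) ^ (-(n:ℝ)) = (ENNReal.ofReal (s ^ n))⁻¹ := by
      rw [ENNReal.rpow_neg, ENNReal.ofReal_rpow_of_pos hs, Real.rpow_natCast]
    constructor
    · exact aux_yInv_pos hΦ0 hΦtz (by rw [h1]; exact ENNReal.inv_pos.mpr ENNReal.ofReal_ne_top)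
    · exact (aux_yInv_lt_top hΦtt (by
        rw [h1]
        exact ENNReal.inv_ne_top.mpr (ENNReal.ofReal_pos.mpr (by positivity)).ne')).ne
  -- It facts
  have hIt0 : 0 < yInv Φ (volume (ball (0:Rn n) t))⁻¹ :=
    aux_yInv_pos hΦ0 hΦtz (ENNReal.inv_pos.mpr hV0t)
  have hItt : yInv Φ (volume (ball (0:Rn n) t))⁻¹ ≠ ∞ :=
    (aux_yInv_lt_top hΦtt (ENNReal.inv_ne_top.mpr hV00)).ne
  -- RHS bound
  have hRHS : (⨆ (x : Rn n) (r : ℝ) (_ : 0 < r),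
        ENNReal.ofReal (φ r)⁻¹ * yInv Φ (volume (ball x r))⁻¹ *
          luxNorm volume Φ ((ball x r).indicator (eabs f))) ≤
      K * ENNReal.ofReal (φ t)⁻¹ := by
    refine iSup_le fun x => iSup_le fun r => iSup_le fun hr => ?_
    have hφr : 0 < φ r := hφpos r hr
    have hind : (ball x r).indicator (eabs f) =
        ((ball x r) ∩ ball (0:Rn n) t).indicator (fun _ => (1:ℝ≥0∞)) := by
      funext y
      by_cases h1 : y ∈ ball x r <;> by_cases h2 : y ∈ ball (0:Rn n) t <;>
        simp [Set.indicator_apply, h1, h2, heabs]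
    rw [hind]
    have hmeas : MeasurableSet ((ball x r) ∩ ball (0:Rn n) t) :=
      measurableSet_ball.inter measurableSet_ball
    rcases le_total r t with hrt | htr
    · -- small radius
      have hVr0 : volume (ball x r) ≠ 0 := (measure_ball_pos volume _ hr).ne'
      have hVrt : volume (ball x r) ≠ ∞ := measure_ball_lt_top.ne
      have hlux := aux_lux_le volume hΦ0 hΦtz hΦtt _ hmeas (volume (ball x r)) hVr0 hVrt
        (measure_mono Set.inter_subset_left)
      have hq : ENNReal.ofReal (φ r)⁻¹ ≤ ENNReal.ofReal Ca * ENNReal.ofReal (φ t)⁻¹ := by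
        rw [← ENNReal.ofReal_mul hCa.le]
        apply ENNReal.ofReal_le_ofReal
        have h1 : φ t / Ca ≤ φ r := (div_le_iff₀' hCa).mpr (hAD r t hr hrt)
        have h2 := inv_anti₀ (div_pos hφt hCa) h1
        rwa [inv_div, div_eq_mul_inv] at h2
      calc ENNReal.ofReal (φ r)⁻¹ * yInv Φ (volume (ball x r))⁻¹ *
            luxNorm volume Φ (((ball x r) ∩ ball (0:Rn n) t).indicator (fun _ => (1:ℝ≥0∞)))
          = ENNReal.ofReal (φ r)⁻¹ * (yInv Φ (volume (ball x r))⁻¹ *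
            luxNorm volume Φ (((ball x r) ∩ ball (0:Rn n) t).indicator (fun _ => (1:ℝ≥0∞)))) :=
            mul_assoc _ _ _
      _ ≤ ENNReal.ofReal (φ r)⁻¹ * 2 := mul_le_mul_right hlux _
      _ ≤ (ENNReal.ofReal Ca * ENNReal.ofReal (φ t)⁻¹) * 2 := mul_le_mul_left hq _
      _ = (ENNReal.ofReal Ca * 2) * ENNReal.ofReal (φ t)⁻¹ := by ring
      _ ≤ K * ENNReal.ofReal (φ t)⁻¹ := by
          rw [hKdef]; exact mul_le_mul_left le_self_add _
    · -- large radius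
      have hlux2 := aux_lux_le volume hΦ0 hΦtz hΦtt _ hmeas (volume (ball (0:Rn n) t))
        hV00 hV0t (measure_mono Set.inter_subset_right)
      have hluxle : luxNorm volume Φ (((ball x r) ∩ ball (0:Rn n) t).indicator
          (fun _ => (1:ℝ≥0∞))) ≤
          (yInv Φ (volume (ball (0:Rn n) t))⁻¹)⁻¹ * 2 := by
        have h3 := mul_le_mul_right hlux2 (yInv Φ (volume (ball (0:Rn n) t))⁻¹)⁻¹
        rwa [← mul_assoc, ENNReal.inv_mul_cancel hIt0.ne' hItt, one_mul] at h3
      have hIr : yInv Φ (volume (ball x r))⁻¹ ≤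
          M1 * yInv Φ ((ENNReal.ofReal r) ^ (-(n:ℝ))) := by
        rw [hVinv x r hr]
        exact hscale1 _
      have hJt : yInv Φ ((ENNReal.ofReal t) ^ (-(n:ℝ))) ≤
          M2 * yInv Φ (volume (ball (0:Rn n) t))⁻¹ := by
        have harg : (ENNReal.ofReal t) ^ (-(n:ℝ)) = c * (volume (ball (0:Rn n) t))⁻¹ := by
          rw [hVinv 0 t ht, ← mul_assoc, ENNReal.mul_inv_cancel hc0 hct, one_mul]
        rw [harg]
        exact hscale2 _
      have hXX : ENNReal.ofReal (φ r)⁻¹ * yInv Φ ((ENNReal.ofReal r) ^ (-(n:ℝ))) ≤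
          Ci * (ENNReal.ofReal (φ t)⁻¹ * yInv Φ ((ENNReal.ofReal t) ^ (-(n:ℝ)))) := by
        obtain ⟨hJr0, hJrt⟩ := hJ r hr
        obtain ⟨hJt0, hJtt⟩ := hJ t ht
        have hPr0 : ENNReal.ofReal (φ r) ≠ 0 := (ENNReal.ofReal_pos.mpr hφr).ne'
        have hPrt : ENNReal.ofReal (φ r) ≠ ∞ := ENNReal.ofReal_ne_top
        have hPt0 : ENNReal.ofReal (φ t) ≠ 0 := (ENNReal.ofReal_pos.mpr hφt).ne'
        have hPtt : ENNReal.ofReal (φ t) ≠ ∞ := ENNReal.ofReal_ne_top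
        have hinv : ∀ s : ℝ, 0 < s →
            ENNReal.ofReal (φ s)⁻¹ * yInv Φ ((ENNReal.ofReal s) ^ (-(n:ℝ))) =
            (ENNReal.ofReal (φ s) / yInv Φ ((ENNReal.ofReal s) ^ (-(n:ℝ))))⁻¹ := by
          intro s hs
          obtain ⟨hJs0, hJst⟩ := hJ s hs
          rw [ENNReal.inv_div (Or.inr ENNReal.ofReal_ne_top)
            (Or.inr (ENNReal.ofReal_pos.mpr (hφpos s hs)).ne'), div_eq_mul_inv, mul_comm,
            ENNReal.ofReal_inv_of_pos (hφpos s hs)]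
        rw [hinv r hr, hinv t ht]
        have hCi0 : (Ci:ℝ≥0∞) ≠ 0 := by exact_mod_cast hCi.ne'
        have hCit : (Ci:ℝ≥0∞) ≠ ∞ := ENNReal.coe_ne_top
        have h5 := ENNReal.inv_le_inv.mpr (hAI t r ht htr)
        rw [ENNReal.mul_inv (Or.inl hCi0) (Or.inl hCit)] at h5
        calc (ENNReal.ofReal (φ r) / yInv Φ ((ENNReal.ofReal r) ^ (-(n:ℝ))))⁻¹
            = (Ci:ℝ≥0∞) * ((Ci:ℝ≥0∞)⁻¹ *
              (ENNReal.ofReal (φ r) / yInv Φ ((ENNReal.ofReal r) ^ (-(n:ℝ))))⁻¹) := by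
              rw [← mul_assoc, ENNReal.mul_inv_cancel hCi0 hCit, one_mul]
        _ ≤ (Ci:ℝ≥0∞) * (ENNReal.ofReal (φ t) /
              yInv Φ ((ENNReal.ofReal t) ^ (-(n:ℝ))))⁻¹ := mul_le_mul_right h5 _
      calc ENNReal.ofReal (φ r)⁻¹ * yInv Φ (volume (ball x r))⁻¹ *
            luxNorm volume Φ (((ball x r) ∩ ball (0:Rn n) t).indicator (fun _ => (1:ℝ≥0∞)))
          ≤ ENNReal.ofReal (φ r)⁻¹ * (M1 * yInv Φ ((ENNReal.ofReal r) ^ (-(n:ℝ)))) *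
            ((yInv Φ (volume (ball (0:Rn n) t))⁻¹)⁻¹ * 2) :=
            mul_le_mul' (mul_le_mul_right hIr _) hluxle
      _ = (2*(M1:ℝ≥0∞)) * (ENNReal.ofReal (φ r)⁻¹ * yInv Φ ((ENNReal.ofReal r) ^ (-(n:ℝ)))) *
            (yInv Φ (volume (ball (0:Rn n) t))⁻¹)⁻¹ := by ring
      _ ≤ (2*(M1:ℝ≥0∞)) * ((Ci:ℝ≥0∞) * (ENNReal.ofReal (φ t)⁻¹ *
            yInv Φ ((ENNReal.ofReal t) ^ (-(n:ℝ))))) *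
            (yInv Φ (volume (ball (0:Rn n) t))⁻¹)⁻¹ := by
            exact mul_le_mul_left (mul_le_mul_right hXX _) _
      _ ≤ (2*(M1:ℝ≥0∞)) * ((Ci:ℝ≥0∞) * (ENNReal.ofReal (φ t)⁻¹ *
            ((M2:ℝ≥0∞) * yInv Φ (volume (ball (0:Rn n) t))⁻¹))) *
            (yInv Φ (volume (ball (0:Rn n) t))⁻¹)⁻¹ := by
            exact mul_le_mul_left (mul_le_mul_right
              (mul_le_mul_right (mul_le_mul_right hJt _) _) _) _
      _ = (2*(M1:ℝ≥0∞)*(Ci:ℝ≥0∞)*(M2:ℝ≥0∞)) * ENNReal.ofReal (φ t)⁻¹ *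
            (yInv Φ (volume (ball (0:Rn n) t))⁻¹ *
              (yInv Φ (volume (ball (0:Rn n) t))⁻¹)⁻¹) := by ring
      _ = (2*(M1:ℝ≥0∞)*(Ci:ℝ≥0∞)*(M2:ℝ≥0∞)) * ENNReal.ofReal (φ t)⁻¹ := by
            rw [ENNReal.mul_inv_cancel hIt0.ne' hItt, mul_one]
      _ ≤ K * ENNReal.ofReal (φ t)⁻¹ := by
            rw [hKdef]; exact mul_le_mul_left le_add_self _
  -- fracMax lower bound on the ball
  have hfrac : ∀ x ∈ ball (0:Rn n) t,
      ENNReal.ofReal (c₀ * t ^ α) ≤ fracMax n α (eabs f) x := by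
    intro x hx
    have h2t : (0:ℝ) < 2 * t := by linarith
    have hsub : ball (0:Rn n) t ⊆ ball x (2*t) := by
      intro y hy
      rw [mem_ball] at hy hx ⊢
      calc dist y x ≤ dist y 0 + dist 0 x := dist_triangle _ _ _
      _ < t + t := by rw [dist_comm (0:Rn n) x]; exact add_lt_add hy hx
      _ = 2 * t := by ring
    have hint : (∫⁻ y in ball x (2*t), eabs f y) = volume (ball (0:Rn n) t) := by
      rw [heabs, lintegral_indicator_const measurableSet_ball,
        Measure.restrict_apply measurableSet_ball, Set.inter_eq_left.mpr hsub, one_mul]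
    have hvol2 : volume (ball x (2*t)) = ENNReal.ofReal ((2*t) ^ n) * c :=
      hballvol x (2*t) h2t.le
    have hval : (ENNReal.ofReal ((2*t) ^ n) * c) ^ (α/(n:ℝ) - 1) *
        volume (ball (0:Rn n) t) = ENNReal.ofReal (c₀ * t ^ α) := by
      have hc' : c = ENNReal.ofReal A := (ENNReal.ofReal_toReal hct).symm
      rw [hV0eq, hc', ← ENNReal.ofReal_mul (by positivity), ← ENNReal.ofReal_mul (by positivity),
        ENNReal.ofReal_rpow_of_pos (by positivity), ← ENNReal.ofReal_mul (by positivity)]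
      congr 1
      have hn0 : (n:ℝ) ≠ 0 := hnR.ne'
      have hexp : (n:ℝ)*(α/(n:ℝ) - 1) + (n:ℝ) = α := by field_simp; ring
      calc ((2*t)^n * A) ^ (α/(n:ℝ) - 1) * (t^n * A)
          = ((2^n * A) * t^n) ^ (α/(n:ℝ) - 1) * (t^n * A) := by rw [mul_pow]; ring_nf
      _ = (2^n * A) ^ (α/(n:ℝ) - 1) * (t^n : ℝ) ^ (α/(n:ℝ) - 1) * (t^n * A) := by
            rw [Real.mul_rpow (by positivity) (by positivity)]
      _ = (2^n * A) ^ (α/(n:ℝ) - 1) * (t ^ ((n:ℝ)*(α/(n:ℝ) - 1))) * (t ^ (n:ℝ) * A) := by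
            rw [← Real.rpow_natCast t n, ← Real.rpow_mul ht.le]
      _ = ((2^n * A) ^ (α/(n:ℝ) - 1) * A) *
            (t ^ ((n:ℝ)*(α/(n:ℝ) - 1)) * t ^ (n:ℝ)) := by ring
      _ = ((2^n * A) ^ (α/(n:ℝ) - 1) * A) * t ^ ((n:ℝ)*(α/(n:ℝ) - 1) + (n:ℝ)) := by
            rw [← Real.rpow_add ht]
      _ = c₀ * t ^ α := by rw [hexp, hc₀def]
    calc ENNReal.ofReal (c₀ * t ^ α)
        = volume (ball x (2*t)) ^ (α/(n:ℝ) - 1) * ∫⁻ y in ball x (2*t), eabs f y := by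
          rw [hint, hvol2, hval]
    _ ≤ fracMax n α (eabs f) x := le_iSup_of_le (2*t) (le_iSup_of_le h2t le_rfl)
  -- weak norm lower bound
  have hIψ0 : 0 < yInv (fun u:ℝ≥0 => Φ (u ^ (1/β))) (volume (ball (0:Rn n) t))⁻¹ :=
    aux_yInv_pos hΨ0 hΨtz (ENNReal.inv_pos.mpr hV0t)
  have hIψt : yInv (fun u:ℝ≥0 => Φ (u ^ (1/β))) (volume (ball (0:Rn n) t))⁻¹ ≠ ∞ :=
    (aux_yInv_lt_top hΨtt (ENNReal.inv_ne_top.mpr hV00)).ne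
  have hwl : ENNReal.ofReal (c₀ * t ^ α) ≤
      yInv (fun u:ℝ≥0 => Φ (u ^ (1/β))) (volume (ball (0:Rn n) t))⁻¹ *
      wLuxNorm volume (fun u:ℝ≥0 => Φ (u ^ (1/β)))
        ((ball (0:Rn n) t).indicator (fracMax n α (eabs f))) :=
    aux_wlux_ge volume hΨmono _ hV00 hV0t rfl hIψ0 hIψt _ _
      (fun x hx => by rw [Set.indicator_of_mem hx]; exact hfrac x hx)
  -- main chain
  have hL : ENNReal.ofReal ((φ t) ^ β)⁻¹ * ENNReal.ofReal (c₀ * t ^ α) ≤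
      D * ENNReal.ofReal (φ t)⁻¹ := by
    calc ENNReal.ofReal ((φ t) ^ β)⁻¹ * ENNReal.ofReal (c₀ * t ^ α)
        ≤ ENNReal.ofReal ((φ t) ^ β)⁻¹ *
          (yInv (fun u:ℝ≥0 => Φ (u ^ (1/β))) (volume (ball (0:Rn n) t))⁻¹ *
            wLuxNorm volume (fun u:ℝ≥0 => Φ (u ^ (1/β)))
              ((ball (0:Rn n) t).indicator (fracMax n α (eabs f)))) := mul_le_mul_right hwl _
    _ = ENNReal.ofReal ((φ t) ^ β)⁻¹ *
          yInv (fun u:ℝ≥0 => Φ (u ^ (1/β))) (volume (ball (0:Rn n) t))⁻¹ *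
            wLuxNorm volume (fun u:ℝ≥0 => Φ (u ^ (1/β)))
              ((ball (0:Rn n) t).indicator (fracMax n α (eabs f))) := (mul_assoc _ _ _).symm
    _ ≤ ⨆ (x : Rn n) (r : ℝ) (_ : 0 < r),
          ENNReal.ofReal ((φ r) ^ β)⁻¹ *
            yInv (fun u : ℝ≥0 => Φ (u ^ (1 / β))) (volume (ball x r))⁻¹ *
            wLuxNorm volume (fun u : ℝ≥0 => Φ (u ^ (1 / β)))
              ((ball x r).indicator (fracMax n α (eabs f))) := by
          refine le_iSup_of_le (0:Rn n) (le_iSup_of_le t (le_iSup_of_le ht ?_))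
          norm_num
    _ ≤ (Cb:ℝ≥0∞) * ⨆ (x : Rn n) (r : ℝ) (_ : 0 < r),
          ENNReal.ofReal (φ r)⁻¹ * yInv Φ (volume (ball x r))⁻¹ *
            luxNorm volume Φ ((ball x r).indicator (eabs f)) := hB f
    _ ≤ (Cb:ℝ≥0∞) * (K * ENNReal.ofReal (φ t)⁻¹) := mul_le_mul_right hRHS _
    _ = D * ENNReal.ofReal (φ t)⁻¹ := by rw [hDdef, mul_assoc]
  -- convert to a real inequality
  have hL2 : ((φ t) ^ β)⁻¹ * (c₀ * t ^ α) ≤ D.toReal * (φ t)⁻¹ := by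
    rw [← ENNReal.ofReal_le_ofReal_iff (by positivity)]
    calc ENNReal.ofReal (((φ t) ^ β)⁻¹ * (c₀ * t ^ α))
        = ENNReal.ofReal ((φ t) ^ β)⁻¹ * ENNReal.ofReal (c₀ * t ^ α) :=
          ENNReal.ofReal_mul (by positivity)
    _ ≤ D * ENNReal.ofReal (φ t)⁻¹ := hL
    _ = ENNReal.ofReal (D.toReal * (φ t)⁻¹) := by
        rw [ENNReal.ofReal_mul ENNReal.toReal_nonneg, ENNReal.ofReal_toReal hDt]
  -- final real algebra
  have hu : φ t ≠ 0 := hφt.ne'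
  have hv : φ t ^ β ≠ 0 := hφβ.ne'
  have h8 := mul_le_mul_of_nonneg_right hL2 (le_of_lt (mul_pos hφt hφβ))
  have e1 : (((φ t) ^ β)⁻¹ * (c₀ * t ^ α)) * (φ t * φ t ^ β) = c₀ * (t ^ α * φ t) := by
    field_simp
  have e2 : (D.toReal * (φ t)⁻¹) * (φ t * φ t ^ β) = D.toReal * φ t ^ β := by
    field_simp
  rw [e1, e2] at h8
  have h9 : c₀ * ((D.toReal / c₀ + 1) * φ t ^ β) = D.toReal * φ t ^ β + c₀ * φ t ^ β := by
    field_simp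
  have h10 : c₀ * (t ^ α * φ t) ≤ c₀ * ((D.toReal / c₀ + 1) * φ t ^ β) := by
    rw [h9]
    have := (mul_pos hc₀ hφβ).le
    linarith
  exact le_of_mul_le_mul_left h10 hc₀
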